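/- Let q : V → K be a diagonalizable anisotropic quadratic form over a field of characteristic 2. Then the similitude group GO(q) acts freely (regularly on each orbit) on V \ {0}; in particular any subgroup G ≤ GO(q) acting transitively on V \ {0} equals GO(q). -/

import Mathlib

/-!
In characteristic 2 a form with vanishing polar is additive, so `q (x - y) = q x + q y = q x - q y`;
anisotropy then makes `q` injective. A similitude with multiplier `r` that agrees with one with
multiplier `s` at an anisotropic vector forces `r = s`, hence the two agree wherever `q` does,
i.e. everywhere. Freeness is the case where one map is the identity, and a transitive subgroup
contains, for every similitude `ψ`, one agreeing with `ψ` at a fixed nonzero vector.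
-/

namespace QuadraticMap

variable {R M N : Type*} [CommRing R] [AddCommGroup M] [Module R M] [AddCommGroup N] [Module R N]

theorem map_add_of_polar_eq_zero {Q : QuadraticMap R M N} (hpolar : ∀ x y, polar Q x y = 0)
    (x y : M) : Q (x + y) = Q x + Q y := by
  rw [← sub_eq_zero, ← sub_sub]
  exact hpolar x y

theorem injective_of_polar_eq_zero [CharP R 2] {Q : QuadraticMap R M R}
    (hpolar : ∀ x y, polar Q x y = 0) (haniso : Q.Anisotropic) : Function.Injective Q := by
  intro x y hxy
  have hsub : Q (x - y) = 0 := by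
    rw [sub_eq_add_neg, map_add_of_polar_eq_zero hpolar, Q.map_neg, hxy,
      CharTwo.add_self_eq_zero]
  exact sub_eq_zero.mp (haniso _ hsub)

end QuadraticMap

theorem eq_of_map_eq_mul_of_apply_eq {α β : Type*} [MonoidWithZero β] [IsRightCancelMulZero β]
    {q : α → β} (hq : Function.Injective q) {f g : α → α} {r s : β}
    (hf : ∀ a, q (f a) = r * q a) (hg : ∀ a, q (g a) = s * q a) {a : α} (ha : q a ≠ 0)
    (hfg : f a = g a) : f = g := by
  have hrs : r = s := mul_right_cancel₀ ha (by rw [← hf, ← hg, hfg])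
  funext b
  exact hq (by rw [hf, hg, hrs])

/-- The similitude group of a diagonalizable anisotropic quadratic form in
characteristic 2 acts freely on V \ {0}; any transitive subgroup is the whole
similitude group. -/
theorem similitudes_act_freely {K V : Type*} [Field K] [CharP K 2]
    [AddCommGroup V] [Module K V]
    (q : QuadraticForm K V)
    (hdiag : ∀ x y : V, QuadraticMap.polar q x y = 0)
    (haniso : QuadraticMap.Anisotropic q) :
    (∀ φ : V ≃ₗ[K] V, (∃ r : K, r ≠ 0 ∧ ∀ v, q (φ v) = r * q v) →
        ∀ v : V, v ≠ 0 → φ v = v → ∀ w, φ w = w) ∧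
    (∀ G : Subgroup (V ≃ₗ[K] V),
        (∀ φ ∈ G, ∃ r : K, r ≠ 0 ∧ ∀ v, q (φ v) = r * q v) →
        (∀ v w : V, v ≠ 0 → w ≠ 0 → ∃ φ ∈ G, φ v = w) →
        ∀ ψ : V ≃ₗ[K] V, (∃ r : K, r ≠ 0 ∧ ∀ v, q (ψ v) = r * q v) → ψ ∈ G) := by
  have hinj := q.injective_of_polar_eq_zero hdiag haniso
  have hq {v : V} (hv : v ≠ 0) : q v ≠ 0 := mt haniso.eq_zero_iff.mp hv
  refine ⟨fun φ ⟨r, _, hφ⟩ v hv hfix => ?_, fun G hGsim htrans ψ ⟨r, _, hψ⟩ => ?_⟩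
  · have hid : ∀ w, q (id w) = 1 * q w := fun w => (one_mul _).symm
    exact congrFun (eq_of_map_eq_mul_of_apply_eq hinj hφ hid (hq hv) hfix)
  · obtain _ | _ := subsingleton_or_nontrivial V
    · exact Subsingleton.elim 1 ψ ▸ G.one_mem
    obtain ⟨v, hv⟩ := exists_ne (0 : V)
    obtain ⟨φ, hφG, hφv⟩ := htrans v (ψ v) hv (ψ.map_ne_zero_iff.mpr hv)
    obtain ⟨s, _, hφ⟩ := hGsim φ hφG
    have hψφ : ψ = φ := LinearEquiv.ext <| congrFun <|
      eq_of_map_eq_mul_of_apply_eq hinj hψ hφ (hq hv) hφv.symm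
    exact hψφ ▸ hφG
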